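/- Let L be a first-order language, A a nonempty L-structure, and I a collection of subsets of A such that I is closed under subsets and under binary unions and ⋃I is all of A (an ideal over A covering A). Suppose that for each i ∈ I we are given a nonempty L-structure Bᵢ together with an injection fᵢ : i → Bᵢ such that the fragments of A and of Bᵢ given by i coincide, i.e.: for every relation symbol R of L and every tuple x of elements of i, R holds of x in A if and only if R holds of the image tuple fᵢ∘x in Bᵢ; and for every function symbol F of L and every tuple x of elements of i, if the value of F at x computed in A lies in i then the value of F at fᵢ∘x computed in Bᵢ equals fᵢ applied to that value, and conversely if the value of F at fᵢ∘x in Bᵢ lies in the range of fᵢ then the value of F at x in A lies in i and is mapped to it by fᵢ. Let D be an ultrafilter on I containing every upper cone {j ∈ I : i ⊆ j} for i ∈ I. Then A embeds isomorphically into the ultraproduct ∏_D Bᵢ. -/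

import Mathlib

/-!
Send `a ∈ A` to the class of the thread `j ↦ f_j a` (arbitrary where `a ∉ j`). Any finitely
many elements of `A` lie in `D`-almost every `j`, because each lies in some member of the
cover and `D` contains its upper cone; on such `j` the thread is computed by `f_j`, which
preserves the relations and function values of the fragment `j`. Hence each atomic fact about
finitely many elements holds in `A` iff it holds in `D`-almost every `B_j`, which is what an
embedding into the ultraproduct needs.
-/

open FirstOrder Language Structure Filter

namespace FirstOrder.Language.Ultraproduct

variable {L : Language} {ι : Type*} {M : ι → Type*} [∀ i, L.Structure (M i)] {u : Ultrafilter ι}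

theorem relMap_cast {n : ℕ} (R : L.Relations n) (x : Fin n → ∀ i, M i) :
    RelMap R (fun k => (x k : (u : Filter ι).Product M)) ↔
      ∀ᶠ i in (u : Filter ι), RelMap R fun k => x k i :=
  relMap_quotient_mk' (s := (u : Filter ι).productSetoid M) R x

variable (u) {A : Type*} [L.Structure A]

def embeddingOfEventually (g : A → ∀ i, M i)
    (hsep : ∀ a b, a ≠ b → ∀ᶠ i in (u : Filter ι), g a i ≠ g b i)
    (hfun : ∀ {n} (F : L.Functions n) (x : Fin n → A),
      ∀ᶠ i in (u : Filter ι), g (funMap F x) i = funMap F fun k => g (x k) i)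
    (hrel : ∀ {n} (R : L.Relations n) (x : Fin n → A),
      ∀ᶠ i in (u : Filter ι), RelMap R (fun k => g (x k) i) ↔ RelMap R x) :
    A ↪[L] (u : Filter ι).Product M where
  toFun a := (g a : (u : Filter ι).Product M)
  inj' a b hab := by
    by_contra hne
    exact u.eventually_not.1 (hsep a b hne) (Quotient.exact' hab)
  map_fun' F x := by
    show ((g (funMap F x) : ∀ i, M i) : (u : Filter ι).Product M) =
      funMap F fun k => (g (x k) : (u : Filter ι).Product M)
    rw [funMap_cast]
    exact Quotient.sound' (hfun F x)
  map_rel' R x := by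
    show RelMap R (fun k => (g (x k) : (u : Filter ι).Product M)) ↔ RelMap R x
    rw [relMap_cast]
    by_cases hx : RelMap R x
    · simpa [hx] using hrel R x
    · simpa [hx] using u.eventually_not.1 ((hrel R x).mono fun i hi => mt hi.1 hx)

end FirstOrder.Language.Ultraproduct

section Fragment

variable {L : Language} {A M : Type*} [L.Structure A] [L.Structure M] {s : Set A}
  (e : s → M) (e' : A → M)

theorem injOn_extend_val (he : Function.Injective e) : Set.InjOn (Subtype.val.extend e e') s :=
  fun a ha b hb hab => by
    rw [Function.extend_val_apply ha, Function.extend_val_apply hb] at hab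
    exact congrArg Subtype.val (he hab)

theorem extend_val_funMap
    (he : ∀ (n : ℕ) (F : L.Functions n) (x : Fin n → s) (h : funMap F (fun k => (x k : A)) ∈ s),
      funMap F (fun k => e (x k)) = e ⟨funMap F (fun k => (x k : A)), h⟩)
    {n : ℕ} (F : L.Functions n) (x : Fin n → A) (hx : ∀ k, x k ∈ s) (hF : funMap F x ∈ s) :
    Subtype.val.extend e e' (funMap F x) = funMap F fun k => Subtype.val.extend e e' (x k) := by
  simp only [Function.extend_val_apply hF, Function.extend_val_apply (hx _)]
  exact (he n F (fun k => ⟨x k, hx k⟩) hF).symm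

theorem extend_val_relMap
    (he : ∀ (n : ℕ) (R : L.Relations n) (x : Fin n → s),
      RelMap R (fun k => (x k : A)) ↔ RelMap R fun k => e (x k))
    {n : ℕ} (R : L.Relations n) (x : Fin n → A) (hx : ∀ k, x k ∈ s) :
    (RelMap R fun k => Subtype.val.extend e e' (x k)) ↔ RelMap R x := by
  simp only [Function.extend_val_apply (hx _)]
  exact (he n R fun k => ⟨x k, hx k⟩).symm

end Fragment

theorem eventually_mem_of_sUnion_eq_univ {A : Type*} {I : Set (Set A)}
    (hcover : ⋃₀ I = Set.univ) {D : Filter I}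
    (hD : ∀ i : I, {j : I | (i : Set A) ⊆ (j : Set A)} ∈ D) (a : A) :
    ∀ᶠ j : I in D, a ∈ (j : Set A) := by
  obtain ⟨i, hi, hai⟩ := Set.sUnion_eq_univ_iff.1 hcover a
  exact mem_of_superset (hD ⟨i, hi⟩) fun _ hij => hij hai

theorem coherent_embeds_into_ultraproduct_general {L : FirstOrder.Language} {A : Type*}
    [L.Structure A]
    (I : Set (Set A))
    (hcover : ⋃₀ I = Set.univ)
    (B : I → Type*) [∀ i, L.Structure (B i)] [∀ i, Nonempty (B i)]
    (f : ∀ i : I, Set.Elem (i : Set A) → B i)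
    (hinj : ∀ i : I, Function.Injective (f i))
    (hrel : ∀ (i : I) (n : ℕ) (R : L.Relations n) (x : Fin n → Set.Elem (i : Set A)),
      RelMap R (fun k => (x k : A)) ↔ RelMap R (fun k => f i (x k)))
    (hfun : ∀ (i : I) (n : ℕ) (F : L.Functions n) (x : Fin n → Set.Elem (i : Set A)),
      (∀ h : funMap F (fun k => (x k : A)) ∈ (i : Set A),
        funMap F (fun k => f i (x k)) = f i ⟨funMap F (fun k => (x k : A)), h⟩) ∧
      (∀ y : Set.Elem (i : Set A), funMap F (fun k => f i (x k)) = f i y →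
        ∃ h : funMap F (fun k => (x k : A)) ∈ (i : Set A),
          f i ⟨funMap F (fun k => (x k : A)), h⟩ = f i y))
    (D : Ultrafilter I)
    (hD : ∀ i : I, {j : I | (i : Set A) ⊆ (j : Set A)} ∈ D) :
    Nonempty (A ↪[L] (D : Filter I).Product B) := by
  have hmem := eventually_mem_of_sUnion_eq_univ hcover hD
  have hmem_tuple {n : ℕ} (x : Fin n → A) : ∀ᶠ j : I in D, ∀ k, x k ∈ (j : Set A) :=
    eventually_all.2 fun k => hmem (x k)
  refine ⟨Ultraproduct.embeddingOfEventually D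
    (fun a j => Subtype.val.extend (f j) (fun _ => Classical.arbitrary (B j)) a) ?_ ?_ ?_⟩
  · intro a b hab
    filter_upwards [hmem a, hmem b] with j ha hb
    exact (injOn_extend_val _ _ (hinj j)).ne ha hb hab
  · intro n F x
    filter_upwards [hmem_tuple x, hmem (funMap F x)] with j hx hF
    exact extend_val_funMap _ _ (fun n F x => (hfun j n F x).1) F x hx hF
  · intro n R x
    filter_upwards [hmem_tuple x] with j hx
    exact extend_val_relMap _ _ (hrel j) R x hx

/-- If `(Bᵢ)_{i ∈ I}` is a system of nonempty structures coherent in `A`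
(indexed by an ideal `I` of subsets covering `A`, each `Bᵢ` agreeing with `A` on the
fragment given by `i`), and `D` is an ultrafilter on `I` containing all upper cones,
then `A` embeds isomorphically into the ultraproduct `∏_D Bᵢ`. -/
theorem coherent_embeds_into_ultraproduct {L : FirstOrder.Language} {A : Type*}
    [L.Structure A] [Nonempty A]
    (I : Set (Set A))
    (hsub : ∀ i ∈ I, ∀ j, j ⊆ i → j ∈ I)
    (hunion : ∀ i ∈ I, ∀ j ∈ I, i ∪ j ∈ I)
    (hcover : ⋃₀ I = Set.univ)
    (B : I → Type*) [∀ i, L.Structure (B i)] [∀ i, Nonempty (B i)]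
    (f : ∀ i : I, Set.Elem (i : Set A) → B i)
    (hinj : ∀ i : I, Function.Injective (f i))
    (hrel : ∀ (i : I) (n : ℕ) (R : L.Relations n) (x : Fin n → Set.Elem (i : Set A)),
      RelMap R (fun k => (x k : A)) ↔ RelMap R (fun k => f i (x k)))
    (hfun : ∀ (i : I) (n : ℕ) (F : L.Functions n) (x : Fin n → Set.Elem (i : Set A)),
      (∀ h : funMap F (fun k => (x k : A)) ∈ (i : Set A),
        funMap F (fun k => f i (x k)) = f i ⟨funMap F (fun k => (x k : A)), h⟩) ∧
      (∀ y : Set.Elem (i : Set A), funMap F (fun k => f i (x k)) = f i y →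
        ∃ h : funMap F (fun k => (x k : A)) ∈ (i : Set A),
          f i ⟨funMap F (fun k => (x k : A)), h⟩ = f i y))
    (D : Ultrafilter I)
    (hD : ∀ i : I, {j : I | (i : Set A) ⊆ (j : Set A)} ∈ D) :
    Nonempty (A ↪[L] (D : Filter I).Product B) :=
  coherent_embeds_into_ultraproduct_general I hcover B f hinj hrel hfun D hD
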